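/- Every dense r-uniform hypergraph G covers pairs: for every pair of distinct vertices i, j of G there exists an edge e ∈ E(G) with {i,j} ⊆ e. -/

import Mathlib

structure UniformHypergraph (r : ℕ) where
  verts : Finset ℕ
  edges : Finset (Finset ℕ)
  edge_sub : ∀ e ∈ edges, e ⊆ verts
  edge_card : ∀ e ∈ edges, e.card = r

namespace UniformHypergraph

variable {r : ℕ}

/-- The polynomial value `λ(E, x) = Σ_{e ∈ E} Π_{i ∈ e} x_i`. -/
def polyValue (E : Finset (Finset ℕ)) (x : ℕ → ℝ) : ℝ :=
  ∑ e ∈ E, ∏ i ∈ e, x i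

/-- A legal weighting: nonnegative, supported on the vertex set, summing to 1. -/
def LegalWeighting (G : UniformHypergraph r) (x : ℕ → ℝ) : Prop :=
  (∀ i, 0 ≤ x i) ∧ (∀ i ∉ G.verts, x i = 0) ∧ ∑ i ∈ G.verts, x i = 1

/-- The Lagrangian of a hypergraph. -/
noncomputable def lagrangian (G : UniformHypergraph r) : ℝ :=
  sSup {l : ℝ | ∃ x, G.LegalWeighting x ∧ l = polyValue G.edges x}

/-- An optimum weighting attains the Lagrangian. -/
def IsOptimal (G : UniformHypergraph r) (x : ℕ → ℝ) : Prop :=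
  G.LegalWeighting x ∧ polyValue G.edges x = G.lagrangian

def IsSubgraph (H G : UniformHypergraph r) : Prop :=
  H.verts ⊆ G.verts ∧ H.edges ⊆ G.edges

def IsProperSubgraph (H G : UniformHypergraph r) : Prop :=
  H.IsSubgraph G ∧ (H.verts ≠ G.verts ∨ H.edges ≠ G.edges)

/-- A hypergraph is dense if every proper subgraph has strictly smaller Lagrangian. -/
def Dense (G : UniformHypergraph r) : Prop :=
  ∀ H : UniformHypergraph r, H.IsProperSubgraph G → H.lagrangian < G.lagrangian

/-- The link `E_i` of a vertex `i`. -/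
def link (G : UniformHypergraph r) (i : ℕ) : Finset (Finset ℕ) :=
  (G.edges.filter fun e => i ∈ e).image fun e => e.erase i

/-- The pair link `E_{ij}`. -/
def pairLink (G : UniformHypergraph r) (i j : ℕ) : Finset (Finset ℕ) :=
  (G.edges.filter fun e => i ∈ e ∧ j ∈ e).image fun e => (e.erase i).erase j

/-- `E_{i \ j} = E_i ∩ E_j^c`. -/
def linkDiff (G : UniformHypergraph r) (i j : ℕ) : Finset (Finset ℕ) :=
  (G.link i).filter fun A => j ∉ A ∧ insert j A ∉ G.edges

/-- `G` contains a clique of order `t`. -/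
def HasClique (G : UniformHypergraph r) (t : ℕ) : Prop :=
  ∃ S ⊆ G.verts, S.card = t ∧ S.powersetCard r ⊆ G.edges

/-- `G` is left-compressed: replacing a vertex of an edge by a smaller vertex
not in the edge yields an edge. -/
def LeftCompressed (G : UniformHypergraph r) : Prop :=
  ∀ e ∈ G.edges, ∀ i j : ℕ, i ∈ G.verts → i < j → j ∈ e → i ∉ e →
    insert i (e.erase j) ∈ G.edges

/-- The subgraph induced on a vertex set `S`. -/
def induce (G : UniformHypergraph r) (S : Finset ℕ) : UniformHypergraph r :=
  ⟨G.verts ∩ S, G.edges.filter fun e => e ⊆ S,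
   fun e he => Finset.subset_inter (G.edge_sub e (Finset.mem_filter.mp he).1)
     (Finset.mem_filter.mp he).2,
   fun e he => G.edge_card e (Finset.mem_filter.mp he).1⟩

end UniformHypergraph

/-- The complete `r`-graph on vertex set `{1, …, t}`. -/
def completeHG (t r : ℕ) : UniformHypergraph r :=
  ⟨Finset.Icc 1 t, (Finset.Icc 1 t).powersetCard r,
   fun _ he => (Finset.mem_powersetCard.mp he).1,
   fun _ he => (Finset.mem_powersetCard.mp he).2⟩

/-- `H₁ = [t-1]^{(3)} \ {(t-3)(t-2)(t-1)}`. -/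
def H1 (t : ℕ) : UniformHypergraph 3 :=
  ⟨Finset.Icc 1 (t-1), (completeHG (t-1) 3).edges.erase {t-3, t-2, t-1},
   fun e he => (completeHG (t-1) 3).edge_sub e (Finset.mem_of_mem_erase he),
   fun e he => (completeHG (t-1) 3).edge_card e (Finset.mem_of_mem_erase he)⟩

/-!
If no edge contains both `i` and `j`, the Lagrangian polynomial is affine in `(x i, x j)`, with
slopes the link sums of `i` and `j`. Moving the whole weight of `j` onto `i` (or of `i` onto `j`,
whichever vertex has the smaller link sum) therefore does not decrease it, and gives a legal
weighting of `G - j` (resp. `G - i`). Hence `λ(G) ≤ max (λ(G - i)) (λ(G - j))`, contradicting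
density.
-/
namespace UniformHypergraph

variable {r : ℕ}

def removeVert (G : UniformHypergraph r) (v : ℕ) : UniformHypergraph r :=
  ⟨G.verts.erase v, G.edges.filter fun e => v ∉ e,
   fun e he => Finset.subset_erase.mpr
     ⟨G.edge_sub e (Finset.mem_filter.mp he).1, (Finset.mem_filter.mp he).2⟩,
   fun e he => G.edge_card e (Finset.mem_filter.mp he).1⟩

lemma removeVert_isProperSubgraph (G : UniformHypergraph r) {v : ℕ} (hv : v ∈ G.verts) :
    (G.removeVert v).IsProperSubgraph G :=
  ⟨⟨Finset.erase_subset _ _, Finset.filter_subset _ _⟩,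
    Or.inl fun h => Finset.erase_eq_self.mp h hv⟩

lemma LegalWeighting.le_one {G : UniformHypergraph r} {x : ℕ → ℝ} (hx : G.LegalWeighting x)
    (k : ℕ) : x k ≤ 1 := by
  by_cases hk : k ∈ G.verts
  · exact hx.2.2 ▸ Finset.single_le_sum (fun i _ => hx.1 i) hk
  · simp [hx.2.1 k hk]

lemma exists_legalWeighting (G : UniformHypergraph r) (hv : G.verts.Nonempty) :
    ∃ x, G.LegalWeighting x := by
  classical
  have hc : (G.verts.card : ℝ) ≠ 0 := by exact_mod_cast hv.card_pos.ne'
  refine ⟨fun k => if k ∈ G.verts then (G.verts.card : ℝ)⁻¹ else 0,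
    fun k => by positivity, fun k hk => if_neg hk, ?_⟩
  rw [Finset.sum_ite_mem, Finset.inter_self, Finset.sum_const, nsmul_eq_mul, mul_inv_cancel₀ hc]

lemma polyValue_le_card (E : Finset (Finset ℕ)) {x : ℕ → ℝ}
    (h0 : ∀ k, 0 ≤ x k) (h1 : ∀ k, x k ≤ 1) : polyValue E x ≤ E.card := by
  calc polyValue E x ≤ ∑ _e ∈ E, (1 : ℝ) :=
        Finset.sum_le_sum fun e _ => Finset.prod_le_one (fun k _ => h0 k) (fun k _ => h1 k)
    _ = E.card := by simp

lemma polyValue_le_lagrangian {G : UniformHypergraph r} {x : ℕ → ℝ} (hx : G.LegalWeighting x) :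
    polyValue G.edges x ≤ G.lagrangian := by
  refine le_csSup ⟨G.edges.card, ?_⟩ ⟨x, hx, rfl⟩
  rintro l ⟨y, hy, rfl⟩
  exact polyValue_le_card _ hy.1 hy.le_one

lemma lagrangian_le {G : UniformHypergraph r} (hv : G.verts.Nonempty) {c : ℝ}
    (h : ∀ x, G.LegalWeighting x → polyValue G.edges x ≤ c) : G.lagrangian ≤ c := by
  obtain ⟨x, hx⟩ := G.exists_legalWeighting hv
  refine csSup_le ⟨_, x, hx, rfl⟩ ?_
  rintro l ⟨y, hy, rfl⟩
  exact h y hy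

lemma polyValue_filter_notMem (E : Finset (Finset ℕ)) {x : ℕ → ℝ} {v : ℕ} (hv : x v = 0) :
    polyValue (E.filter fun e => v ∉ e) x = polyValue E x :=
  Finset.sum_filter_of_ne fun _ _ hne hve => hne (Finset.prod_eq_zero hve hv)

def linkSum (E : Finset (Finset ℕ)) (v : ℕ) (x : ℕ → ℝ) : ℝ :=
  ∑ e ∈ E with v ∈ e, ∏ k ∈ e.erase v, x k

lemma sum_filter_mem_prod_eq_mul_linkSum (E : Finset (Finset ℕ)) (v : ℕ) (x : ℕ → ℝ) :
    ∑ e ∈ E with v ∈ e, ∏ k ∈ e, x k = x v * linkSum E v x := by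
  rw [linkSum, Finset.mul_sum]
  exact Finset.sum_congr rfl fun e he =>
    (Finset.mul_prod_erase e x (Finset.mem_filter.mp he).2).symm

lemma polyValue_eq_linkSum (E : Finset (Finset ℕ)) {i j : ℕ} (hE : ∀ e ∈ E, i ∈ e → j ∉ e)
    (x : ℕ → ℝ) :
    polyValue E x = x i * linkSum E i x + x j * linkSum E j x
      + polyValue {e ∈ E | i ∉ e ∧ j ∉ e} x := by
  have hj : {e ∈ {e ∈ E | i ∉ e} | j ∈ e} = {e ∈ E | j ∈ e} := by
    rw [Finset.filter_filter]
    exact Finset.filter_congr fun e he =>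
      ⟨And.right, fun hje => ⟨fun hie => hE e he hie hje, hje⟩⟩
  rw [polyValue, ← Finset.sum_filter_add_sum_filter_not E (fun e => i ∈ e),
    ← Finset.sum_filter_add_sum_filter_not {e ∈ E | i ∉ e} (fun e => j ∈ e), hj,
    Finset.filter_filter, sum_filter_mem_prod_eq_mul_linkSum,
    sum_filter_mem_prod_eq_mul_linkSum, polyValue, add_assoc]

def moveWeight (x : ℕ → ℝ) (j i : ℕ) : ℕ → ℝ :=
  Function.update (Function.update x j 0) i (x i + x j)

section moveWeight

variable {x : ℕ → ℝ} {i j : ℕ}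

lemma moveWeight_self_left : moveWeight x j i i = x i + x j := by
  simp [moveWeight]

lemma moveWeight_self_right (hij : i ≠ j) : moveWeight x j i j = 0 := by
  simp [moveWeight, hij.symm]

lemma moveWeight_of_ne {k : ℕ} (hki : k ≠ i) (hkj : k ≠ j) : moveWeight x j i k = x k := by
  simp [moveWeight, hki, hkj]

lemma moveWeight_nonneg (hx : ∀ k, 0 ≤ x k) (k : ℕ) : 0 ≤ moveWeight x j i k := by
  unfold moveWeight
  rcases eq_or_ne k i with rfl | hki
  · simpa using add_nonneg (hx k) (hx j)
  rcases eq_or_ne k j with rfl | hkj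
  · simp [hki]
  · simpa [hki, hkj] using hx k

lemma sum_moveWeight {s : Finset ℕ} (hi : i ∈ s) (hj : j ∈ s) (hij : i ≠ j) :
    ∑ k ∈ s, moveWeight x j i k = ∑ k ∈ s, x k := by
  have hj' : j ∈ s.erase i := Finset.mem_erase.mpr ⟨hij.symm, hj⟩
  have hrest : ∑ k ∈ (s.erase i).erase j, moveWeight x j i k = ∑ k ∈ (s.erase i).erase j, x k :=
    Finset.sum_congr rfl fun k hk =>
      moveWeight_of_ne (Finset.ne_of_mem_erase (Finset.mem_of_mem_erase hk))
        (Finset.ne_of_mem_erase hk)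
  rw [← Finset.add_sum_erase _ _ hi, ← Finset.add_sum_erase _ _ hj', hrest,
    moveWeight_self_left, moveWeight_self_right hij, ← Finset.add_sum_erase _ x hi,
    ← Finset.add_sum_erase _ x hj']
  ring

lemma LegalWeighting.moveWeight {G : UniformHypergraph r} (hx : G.LegalWeighting x)
    (hi : i ∈ G.verts) (hj : j ∈ G.verts) (hij : i ≠ j) :
    (G.removeVert j).LegalWeighting (moveWeight x j i) := by
  refine ⟨moveWeight_nonneg hx.1, fun k hk => ?_, ?_⟩
  · rcases eq_or_ne k j with rfl | hkj
    · exact moveWeight_self_right hij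
    have hkG : k ∉ G.verts := fun h => hk (Finset.mem_erase.mpr ⟨hkj, h⟩)
    rw [moveWeight_of_ne (by rintro rfl; exact hkG hi) hkj, hx.2.1 k hkG]
  · show ∑ k ∈ G.verts.erase j, _ = 1
    rw [Finset.sum_erase _ (moveWeight_self_right hij), sum_moveWeight hi hj hij, hx.2.2]

lemma polyValue_le_polyValue_moveWeight (E : Finset (Finset ℕ)) (hE : ∀ e ∈ E, i ∈ e → j ∉ e)
    (hij : i ≠ j) (hxj : 0 ≤ x j) (hlink : linkSum E j x ≤ linkSum E i x) :
    polyValue E x ≤ polyValue E (moveWeight x j i) := by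
  have hlink_i : linkSum E i (moveWeight x j i) = linkSum E i x := by
    refine Finset.sum_congr rfl fun e he => Finset.prod_congr rfl fun k hk => ?_
    have hie := Finset.mem_filter.mp he
    exact moveWeight_of_ne (Finset.ne_of_mem_erase hk)
      fun hkj => hE e hie.1 hie.2 (hkj ▸ Finset.mem_of_mem_erase hk)
  have hrest : polyValue {e ∈ E | i ∉ e ∧ j ∉ e} (moveWeight x j i)
      = polyValue {e ∈ E | i ∉ e ∧ j ∉ e} x := by
    refine Finset.sum_congr rfl fun e he => Finset.prod_congr rfl fun k hk => ?_
    have hnot := (Finset.mem_filter.mp he).2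
    exact moveWeight_of_ne (fun h => hnot.1 (h ▸ hk)) fun h => hnot.2 (h ▸ hk)
  rw [polyValue_eq_linkSum E hE, polyValue_eq_linkSum E hE, hlink_i, hrest,
    moveWeight_self_left, moveWeight_self_right hij]
  nlinarith [mul_le_mul_of_nonneg_left hlink hxj]

end moveWeight

lemma polyValue_le_lagrangian_removeVert {G : UniformHypergraph r} {x : ℕ → ℝ} {i j : ℕ}
    (hx : G.LegalWeighting x) (hi : i ∈ G.verts) (hj : j ∈ G.verts) (hij : i ≠ j)
    (hG : ∀ e ∈ G.edges, i ∈ e → j ∉ e) (hlink : linkSum G.edges j x ≤ linkSum G.edges i x) :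
    polyValue G.edges x ≤ (G.removeVert j).lagrangian :=
  calc polyValue G.edges x ≤ polyValue G.edges (moveWeight x j i) :=
        polyValue_le_polyValue_moveWeight _ hG hij (hx.1 j) hlink
    _ = polyValue (G.removeVert j).edges (moveWeight x j i) :=
        (polyValue_filter_notMem _ (moveWeight_self_right hij)).symm
    _ ≤ (G.removeVert j).lagrangian := polyValue_le_lagrangian (hx.moveWeight hi hj hij)

lemma lagrangian_le_max_removeVert (G : UniformHypergraph r) {i j : ℕ} (hi : i ∈ G.verts)
    (hj : j ∈ G.verts) (hij : i ≠ j) (hG : ∀ e ∈ G.edges, i ∈ e → j ∉ e) :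
    G.lagrangian ≤ max (G.removeVert i).lagrangian (G.removeVert j).lagrangian := by
  refine lagrangian_le ⟨i, hi⟩ fun x hx => ?_
  rcases le_total (linkSum G.edges j x) (linkSum G.edges i x) with hlink | hlink
  · exact (polyValue_le_lagrangian_removeVert hx hi hj hij hG hlink).trans (le_max_right _ _)
  · have hG' : ∀ e ∈ G.edges, j ∈ e → i ∉ e := fun e he hje hie => hG e he hie hje
    exact (polyValue_le_lagrangian_removeVert hx hj hi hij.symm hG' hlink).trans
      (le_max_left _ _)

end UniformHypergraph

/-- Every dense hypergraph covers pairs. -/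
theorem dense_covers_pairs {r : ℕ} (G : UniformHypergraph r) (hG : G.Dense) :
    ∀ i ∈ G.verts, ∀ j ∈ G.verts, i ≠ j → ∃ e ∈ G.edges, i ∈ e ∧ j ∈ e := by
  intro i hi j hj hij
  by_contra! hcov
  have hlt : max (G.removeVert i).lagrangian (G.removeVert j).lagrangian < G.lagrangian :=
    max_lt (hG _ (G.removeVert_isProperSubgraph hi)) (hG _ (G.removeVert_isProperSubgraph hj))
  exact (G.lagrangian_le_max_removeVert hi hj hij hcov).not_gt hlt
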